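/- Rosenblatt–Willis: A discrete group G is amenable if and only if for every finite string 𝔤 of elements of G and every finite partition ℰ of G, the system of configuration equations Eq(𝔤,ℰ) has a normalized solution, i.e., a solution (f_C)_{C ∈ Con(𝔤,ℰ)} with f_C ≥ 0 for all C and ∑_{C ∈ Con(𝔤,ℰ)} f_C = 1. -/

import Mathlib

/-!
If `μ` is an invariant mean, `f_C = μ (x₀(C))` is a normalized solution: the cells `x₀(C)` partition
`G`, and the cells of the configurations with `c_j = i` make up `g_j⁻¹ E_i`, whose measure `μ (E_i)`
does not depend on `j`.

Conversely, given finitely many pairs `(a, A)`, let `𝔤` list the `a` and let `ℰ` be the atoms of the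
Boolean algebra generated by the sets `A` and `a • A`. Choosing a point `w_C ∈ x₀(C)` for every
configuration, `∑ f_C δ_{w_C}` is a finitely additive probability measure, and since the equations
say that `c_0` and `c_j` have the same distribution under `f`, it gives `A` and `a • A` the same
measure. By the finite intersection property in the compact space `[0,1]^𝒫(G)`, some mean is
invariant under all pairs at once.
-/

open Pointwise

namespace PaperStmt

/-- A group admits a paradoxical decomposition: there are pairwise disjoint subsets
`A 1, …, A p, B 1, …, B q` and group elements `s i`, `t j` such that the translates
`s i • A i` partition `G` and the translates `t j • B j` partition `G`. -/
def IsParadoxical (G : Type*) [Group G] : Prop :=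
  ∃ (p q : ℕ), 0 < p ∧ 0 < q ∧
    ∃ (A : Fin p → Set G) (B : Fin q → Set G) (s : Fin p → G) (t : Fin q → G),
      (∀ i i', i ≠ i' → Disjoint (A i) (A i')) ∧
      (∀ j j', j ≠ j' → Disjoint (B j) (B j')) ∧
      (∀ i j, Disjoint (A i) (B j)) ∧
      (⋃ i, s i • A i) = Set.univ ∧
      (∀ i i', i ≠ i' → Disjoint (s i • A i) (s i' • A i')) ∧
      (⋃ j, t j • B j) = Set.univ ∧
      (∀ j j', j ≠ j' → Disjoint (t j • B j) (t j' • B j'))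

/-- A finitely additive, left-invariant probability measure defined on all subsets of `G`
(the defining property of amenability for a discrete group). -/
def HasLeftInvariantMean (G : Type*) [Group G] : Prop :=
  ∃ μ : Set G → ℝ,
    (∀ A : Set G, 0 ≤ μ A ∧ μ A ≤ 1) ∧
    μ Set.univ = 1 ∧
    (∀ A B : Set G, Disjoint A B → μ (A ∪ B) = μ A + μ B) ∧
    (∀ (g : G) (A : Set G), μ (g • A) = μ A)

/-- A *complete* paradoxical decomposition with `p + q` pieces: the pieces
`A 1, …, A p, B 1, …, B q` form a partition of `G`, and the translates
`s i • A i` and `t j • B j` each form a partition of `G`. -/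
def IsCompleteParadox (G : Type*) [Group G] (p q : ℕ) : Prop :=
  ∃ (A : Fin p → Set G) (B : Fin q → Set G) (s : Fin p → G) (t : Fin q → G),
    (∀ i i', i ≠ i' → Disjoint (A i) (A i')) ∧
    (∀ j j', j ≠ j' → Disjoint (B j) (B j')) ∧
    (∀ i j, Disjoint (A i) (B j)) ∧
    ((⋃ i, A i) ∪ (⋃ j, B j)) = Set.univ ∧
    (⋃ i, s i • A i) = Set.univ ∧
    (∀ i i', i ≠ i' → Disjoint (s i • A i) (s i' • A i')) ∧
    (⋃ j, t j • B j) = Set.univ ∧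
    (∀ j j', j ≠ j' → Disjoint (t j • B j) (t j' • B j'))

/-- The Tarski number of a group: the least total number of pieces `p + q` over all
complete paradoxical decompositions of `G`, and `∞` if there is none. -/
noncomputable def tarskiNumber (G : Type*) [Group G] : ℕ∞ :=
  sInf {N : ℕ∞ | ∃ p q : ℕ, N = ((p + q : ℕ) : ℕ∞) ∧ IsCompleteParadox G p q}

end PaperStmt

open Pointwise

namespace PaperStmt

/-- `E : Fin m → Set G` is a partition of `G`: pairwise disjoint with union all of `G`. -/
def IsPartition {G : Type*} {m : ℕ} (E : Fin m → Set G) : Prop :=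
  (∀ i j, i ≠ j → Disjoint (E i) (E j)) ∧ (⋃ i, E i) = Set.univ

/-- `C = (c_0, …, c_n)` is a configuration for the pair `(g, E)`: there is `x ∈ E (c 0)`
with `g i * x ∈ E (c i)` for `1 ≤ i ≤ n`. -/
def IsConfig {G : Type*} [Group G] {n m : ℕ} (g : Fin n → G) (E : Fin m → Set G)
    (C : Fin (n + 1) → Fin m) : Prop :=
  ∃ x : G, x ∈ E (C 0) ∧ ∀ i : Fin n, g i * x ∈ E (C i.succ)

/-- `x_0(C) = E_{c_0} ∩ ⋂_{j=1}^n g_j⁻¹ E_{c_j}`. -/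
def xzero {G : Type*} [Group G] {n m : ℕ} (g : Fin n → G) (E : Fin m → Set G)
    (C : Fin (n + 1) → Fin m) : Set G :=
  E (C 0) ∩ ⋂ i : Fin n, (g i)⁻¹ • E (C i.succ)

/-- The string `(g_0, g_1, …, g_n)` with `g_0 = e`. -/
def ghat {G : Type*} [Group G] {n : ℕ} (g : Fin n → G) : Fin (n + 1) → G := Fin.cons 1 g

/-- `x_j(C) = g_j • x_0(C)` for `0 ≤ j ≤ n` (with `g_0 = e`). -/
def xj {G : Type*} [Group G] {n m : ℕ} (g : Fin n → G) (E : Fin m → Set G)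
    (C : Fin (n + 1) → Fin m) (j : Fin (n + 1)) : Set G :=
  ghat g j • xzero g E C

/-- The real-valued indicator of a proposition. -/
noncomputable def ind (P : Prop) : ℝ :=
  letI := Classical.propDecidable P; if P then 1 else 0

/-- `f` is a solution of the system of configuration equations `Eq(g, E)`:
for all `1 ≤ i ≤ m` and `0 ≤ j, k ≤ n`,
`∑_{C : x_j(C) ⊆ E_i} f C = ∑_{C : x_k(C) ⊆ E_i} f C`. -/
def IsEqSolution {G : Type*} [Group G] {n m : ℕ} (g : Fin n → G) (E : Fin m → Set G)
    (f : {C : Fin (n + 1) → Fin m // IsConfig g E C} → ℝ) : Prop :=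
  ∀ (i : Fin m) (j k : Fin (n + 1)),
    ∑ᶠ C ∈ {C : {C : Fin (n + 1) → Fin m // IsConfig g E C} | xj g E C.1 j ⊆ E i}, f C =
    ∑ᶠ C ∈ {C : {C : Fin (n + 1) → Fin m // IsConfig g E C} | xj g E C.1 k ⊆ E i}, f C

end PaperStmt

namespace PaperStmt

open Set Function

section Mean

variable {α : Type*}

def IsMean (μ : Set α → ℝ) : Prop :=
  (∀ A, 0 ≤ μ A ∧ μ A ≤ 1) ∧ μ univ = 1 ∧ ∀ A B, Disjoint A B → μ (A ∪ B) = μ A + μ B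

lemma hasLeftInvariantMean_iff {G : Type*} [Group G] :
    HasLeftInvariantMean G ↔
      ∃ μ : Set G → ℝ, IsMean μ ∧ ∀ (a : G) (A : Set G), μ (a • A) = μ A := by
  simp only [HasLeftInvariantMean, IsMean, and_assoc]

lemma IsMean.empty {μ : Set α → ℝ} (hμ : IsMean μ) : μ ∅ = 0 := by
  have := hμ.2.2 ∅ ∅ (disjoint_empty _)
  rw [union_empty] at this
  linarith

lemma IsMean.biUnion_finset {ι : Type*} {μ : Set α → ℝ} (hμ : IsMean μ) (s : Finset ι)
    {A : ι → Set α} (hA : (s : Set ι).PairwiseDisjoint A) :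
    μ (⋃ i ∈ s, A i) = ∑ i ∈ s, μ (A i) := by
  classical
  induction s using Finset.induction_on with
  | empty => simpa using hμ.empty
  | insert a s ha ih =>
    rw [Finset.coe_insert, pairwiseDisjoint_insert_of_notMem ha] at hA
    rw [Finset.set_biUnion_insert, Finset.sum_insert ha, hμ.2.2 _ _ ?_, ih hA.1]
    exact disjoint_iUnion₂_right.2 hA.2

lemma isCompact_setOf_isMean : IsCompact {μ : Set α → ℝ | IsMean μ} := by
  refine (isCompact_univ_pi fun _ : Set α => isCompact_Icc (a := (0 : ℝ)) (b := 1))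
    |>.of_isClosed_subset ?_ fun μ hμ A _ => hμ.1 A
  simp only [IsMean, ofPred_and]
  refine .inter ?_ (.inter (isClosed_eq (continuous_apply _) continuous_const) ?_)
  · rw [ofPred_forall]
    exact isClosed_iInter fun A => (isClosed_le continuous_const (continuous_apply A)).inter
      (isClosed_le (continuous_apply A) continuous_const)
  · rw [ofPred_forall]
    refine isClosed_iInter fun A => ?_
    rw [ofPred_forall]
    exact isClosed_iInter fun B => isClosed_imp isOpen_const <|
      isClosed_eq (continuous_apply _) ((continuous_apply A).add (continuous_apply B))

open Classical in
lemma isMean_sum_filter_mem {ι : Type*} [Fintype ι] {f : ι → ℝ} (hf0 : ∀ i, 0 ≤ f i)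
    (hf1 : ∑ i, f i = 1) (w : ι → α) : IsMean fun A => ∑ i with w i ∈ A, f i := by
  refine ⟨fun A => ⟨Finset.sum_nonneg fun i _ => hf0 i,
    hf1 ▸ Finset.sum_le_univ_sum_of_nonneg hf0⟩, by simpa using hf1, fun A B hAB => ?_⟩
  simp only [mem_union, Finset.filter_or]
  exact Finset.sum_union (Finset.disjoint_filter.2 fun i _ hA hB => disjoint_left.1 hAB hA hB)

lemma hasLeftInvariantMean_of_forall_finset {G : Type*} [Group G]
    (h : ∀ P : Finset (G × Set G), ∃ μ : Set G → ℝ, IsMean μ ∧ ∀ p ∈ P, μ (p.1 • p.2) = μ p.2) :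
    HasLeftInvariantMean G := by
  obtain ⟨μ, hμ, hinv⟩ := isCompact_setOf_isMean.inter_iInter_nonempty
    (fun p : G × Set G => {μ : Set G → ℝ | μ (p.1 • p.2) = μ p.2})
    (fun p => isClosed_eq (continuous_apply _) (continuous_apply _))
    (fun P => let ⟨μ, hμ, hP⟩ := h P; ⟨μ, hμ, mem_iInter₂.2 hP⟩)
  exact hasLeftInvariantMean_iff.2 ⟨μ, hμ, fun a A => mem_iInter.1 hinv (a, A)⟩

end Mean

lemma IsPartition.pairwise_disjoint {α : Type*} {m : ℕ} {E : Fin m → Set α} (hE : IsPartition E) :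
    Pairwise (Disjoint on E) :=
  hE.1

section Configurations

variable {G : Type*} [Group G] {n m : ℕ} {g : Fin n → G} {E : Fin m → Set G}

variable (g E) in
abbrev Con := {C : Fin (n + 1) → Fin m // IsConfig g E C}

noncomputable instance : Fintype (Con g E) := Fintype.ofFinite _

lemma mem_xzero_iff {C : Fin (n + 1) → Fin m} {x : G} :
    x ∈ xzero g E C ↔ ∀ k, ghat g k * x ∈ E (C k) := by
  simp [xzero, Fin.forall_fin_succ, ghat, mem_smul_set_iff_inv_smul_mem]

lemma isConfig_iff_nonempty {C : Fin (n + 1) → Fin m} :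
    IsConfig g E C ↔ (xzero g E C).Nonempty := by
  simp only [IsConfig, Set.Nonempty, mem_xzero_iff, Fin.forall_fin_succ, ghat, Fin.cons_zero,
    Fin.cons_succ, one_mul]

lemma exists_mem_xzero (hE : ⋃ i, E i = univ) (x : G) : ∃ C : Con g E, x ∈ xzero g E C.1 := by
  choose c hc using fun y => mem_iUnion.1 (hE ▸ mem_univ y : y ∈ ⋃ i, E i)
  have hx : x ∈ xzero g E fun k => c (ghat g k * x) := mem_xzero_iff.2 fun k => hc _
  exact ⟨⟨_, isConfig_iff_nonempty.2 ⟨x, hx⟩⟩, hx⟩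

lemma pairwise_disjoint_xzero (hE : Pairwise (Disjoint on E)) :
    Pairwise (Disjoint on fun C : Con g E => xzero g E C.1) := by
  refine fun C C' hne => disjoint_left.2 fun x hC hC' => hne (Subtype.ext (funext fun k => ?_))
  exact hE.eq (not_disjoint_iff.2 ⟨_, mem_xzero_iff.1 hC k, mem_xzero_iff.1 hC' k⟩)

lemma xj_subset_iff (hE : Pairwise (Disjoint on E)) {C : Fin (n + 1) → Fin m}
    (hC : IsConfig g E C) {j : Fin (n + 1)} {i : Fin m} : xj g E C j ⊆ E i ↔ C j = i := by
  have hsub : xj g E C j ⊆ E (C j) := by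
    rintro _ ⟨x, hx, rfl⟩
    exact mem_xzero_iff.1 hx j
  obtain ⟨x, hx⟩ := isConfig_iff_nonempty.1 hC
  have hxj : ghat g j • x ∈ xj g E C j := smul_mem_smul_set hx
  exact ⟨fun h => hE.eq (not_disjoint_iff.2 ⟨_, hsub hxj, h hxj⟩), by rintro rfl; exact hsub⟩

lemma isEqSolution_iff (hE : Pairwise (Disjoint on E)) (f : Con g E → ℝ) :
    IsEqSolution g E f ↔ ∀ i j k, ∑ C with C.1 j = i, f C = ∑ C with C.1 k = i, f C := by
  have hsum (i : Fin m) (j : Fin (n + 1)) :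
      ∑ᶠ C ∈ {C : Con g E | xj g E C.1 j ⊆ E i}, f C = ∑ C with C.1 j = i, f C := by
    rw [← finsum_mem_coe_finset]
    congr
    ext C
    simp [xj_subset_iff hE C.2]
  simp only [IsEqSolution, hsum]

lemma biUnion_xzero_eq_smul (hE : IsPartition E) (i : Fin m) (j : Fin (n + 1)) :
    ⋃ C ∈ ({C | C.1 j = i} : Finset (Con g E)), xzero g E C.1 = (ghat g j)⁻¹ • E i := by
  ext x
  simp only [mem_iUnion, Finset.mem_filter_univ, exists_prop, mem_inv_smul_set_iff, smul_eq_mul]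
  constructor
  · rintro ⟨C, rfl, hx⟩
    exact mem_xzero_iff.1 hx j
  · intro hx
    obtain ⟨C, hC⟩ := exists_mem_xzero hE.2 x
    exact ⟨C, hE.pairwise_disjoint.eq (not_disjoint_iff.2 ⟨_, mem_xzero_iff.1 hC j, hx⟩), hC⟩

variable (g) in
lemma sum_mean_xzero {μ : Set G → ℝ} (hμ : IsMean μ) (hE : IsPartition E) :
    ∑ C : Con g E, μ (xzero g E C.1) = 1 := by
  rw [← hμ.biUnion_finset _ ((pairwise_disjoint_xzero hE.pairwise_disjoint).set_pairwise _),
    ← hμ.2.1]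
  congr 1
  simpa using iUnion_eq_univ_iff.2 (exists_mem_xzero (g := g) hE.2)

variable (g) in
lemma isEqSolution_mean_xzero {μ : Set G → ℝ} (hμ : IsMean μ)
    (hinv : ∀ (a : G) (A : Set G), μ (a • A) = μ A) (hE : IsPartition E) :
    IsEqSolution g E fun C => μ (xzero g E C.1) := by
  have hfiber (i : Fin m) (j : Fin (n + 1)) :
      ∑ C : Con g E with C.1 j = i, μ (xzero g E C.1) = μ (E i) := by
    rw [← hμ.biUnion_finset _ ((pairwise_disjoint_xzero hE.pairwise_disjoint).set_pairwise _),
      biUnion_xzero_eq_smul hE, hinv]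
  exact (isEqSolution_iff hE.pairwise_disjoint _).2 fun i j k => by rw [hfiber, hfiber]

lemma isPartition_fibers {α : Type*} (φ : α → Fin m) : IsPartition fun i => φ ⁻¹' {i} :=
  ⟨pairwise_disjoint_fiber φ, iUnion_eq_univ_iff.2 fun x => ⟨φ x, rfl⟩⟩

open Classical in
lemma exists_isMean_of_isEqSolution_fibers (φ : G → Fin m)
    {f : Con g (fun i => φ ⁻¹' {i}) → ℝ} (hf0 : ∀ C, 0 ≤ f C) (hf1 : ∑ C, f C = 1)
    (hf : IsEqSolution g (fun i => φ ⁻¹' {i}) f) :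
    ∃ μ : Set G → ℝ, IsMean μ ∧
      ∀ (k : Fin n) (Q R : Set (Fin m)), g k • φ ⁻¹' Q = φ ⁻¹' R → μ (φ ⁻¹' R) = μ (φ ⁻¹' Q) := by
  choose w hw using fun C : Con g (fun i => φ ⁻¹' {i}) => isConfig_iff_nonempty.1 C.2
  have hφw (C) (k) : φ (ghat g k * w C) = C.1 k := mem_xzero_iff.1 (hw C) k
  have heq := (isEqSolution_iff (isPartition_fibers φ).pairwise_disjoint f).1 hf
  refine ⟨fun A => ∑ C with w C ∈ A, f C, isMean_sum_filter_mem hf0 hf1 w, fun k Q R hQR => ?_⟩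
  calc ∑ C with w C ∈ φ ⁻¹' R, f C = ∑ C with C.1 0 ∈ R.toFinset, f C := by
        refine Finset.sum_congr (Finset.filter_congr fun C _ => ?_) fun _ _ => rfl
        simp [← hφw C 0, ghat]
    _ = ∑ C with C.1 k.succ ∈ R.toFinset, f C := by
        simp only [← Finset.sum_fiberwise_eq_sum_filter, heq _ 0 k.succ]
    _ = ∑ C with g k • w C ∈ g k • φ ⁻¹' Q, f C := by
        refine Finset.sum_congr (Finset.filter_congr fun C _ => ?_) fun _ _ => rfl
        rw [hQR]
        simp [← hφw C k.succ, ghat]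
    _ = ∑ C with w C ∈ φ ⁻¹' Q, f C := by simp only [smul_mem_smul_set_iff]

end Configurations

lemma exists_isMean_invariant_on_finset {G : Type*} [Group G]
    (H : ∀ (n m : ℕ) (g : Fin n → G) (E : Fin m → Set G), IsPartition E →
      ∃ f : {C : Fin (n + 1) → Fin m // IsConfig g E C} → ℝ,
        (∀ C, 0 ≤ f C) ∧ (∑ᶠ C, f C) = 1 ∧ IsEqSolution g E f)
    (P : Finset (G × Set G)) :
    ∃ μ : Set G → ℝ, IsMean μ ∧ ∀ p ∈ P, μ (p.1 • p.2) = μ p.2 := by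
  classical
  -- the fibres of `e ∘ ψ` are the atoms generated by the sets `A` and `a • A`, `(a, A) ∈ P`
  let ψ : G → P → Prop × Prop := fun x p => (x ∈ p.1.2, x ∈ p.1.1 • p.1.2)
  let e := Fintype.equivFin (P → Prop × Prop)
  let g : Fin P.card → G := fun k => (P.equivFin.symm k).1.1
  obtain ⟨f, hf0, hf1, hf⟩ := H _ _ g _ (isPartition_fibers (e ∘ ψ))
  rw [finsum_eq_sum_of_fintype] at hf1
  obtain ⟨μ, hμ, hinv⟩ := exists_isMean_of_isEqSolution_fibers (e ∘ ψ) hf0 hf1 hf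
  refine ⟨μ, hμ, fun p hp => ?_⟩
  have hg : g (P.equivFin ⟨p, hp⟩) = p.1 := by simp [g]
  have hpre (π : Prop × Prop → Prop) :
      (e ∘ ψ) ⁻¹' {i | π (e.symm i ⟨p, hp⟩)} = {x | π (ψ x ⟨p, hp⟩)} := by
    ext
    simp
  have := hinv (P.equivFin ⟨p, hp⟩) {i | (e.symm i ⟨p, hp⟩).1} {i | (e.symm i ⟨p, hp⟩).2}
  simpa [hpre, hg, ψ] using this

/-- **Rosenblatt–Willis.** A discrete group `G` is amenable if and only if for every finite
string `g` of elements of `G` and every finite partition `E` of `G`, the system of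
configuration equations `Eq(g, E)` has a normalized solution: a nonnegative solution
`(f_C)_{C ∈ Con(g, E)}` with `∑_C f_C = 1`. -/
theorem rosenblatt_willis (G : Type*) [Group G] :
    HasLeftInvariantMean G ↔
      ∀ (n m : ℕ) (g : Fin n → G) (E : Fin m → Set G), IsPartition E →
        ∃ f : {C : Fin (n + 1) → Fin m // IsConfig g E C} → ℝ,
          (∀ C, 0 ≤ f C) ∧ (∑ᶠ C, f C) = 1 ∧ IsEqSolution g E f := by
  refine ⟨fun hG n m g E hE => ?_, fun H =>
    hasLeftInvariantMean_of_forall_finset (exists_isMean_invariant_on_finset H)⟩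
  obtain ⟨μ, hμ, hinv⟩ := hasLeftInvariantMean_iff.1 hG
  refine ⟨fun C => μ (xzero g E C.1), fun C => (hμ.1 _).1, ?_, isEqSolution_mean_xzero g hμ hinv hE⟩
  rw [finsum_eq_sum_of_fintype]
  exact sum_mean_xzero g hμ hE

end PaperStmt
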